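/- arXiv:1310.5202 — 2 statements merged into one kernel-verified Lean document; each statement's English description precedes it below -/
import Mathlib

section
/- For any pair of nondegenerate hierarchies 𝒜, ℬ over a finite set S, the crossing dissimilarity is bounded linearly below and quadratically above by the Robinson–Foulds distance: d_RF(𝒜,ℬ) ≤ d_CM(𝒜,ℬ) ≤ d_RF(𝒜,ℬ)². -/
open scoped Classical

namespace TreeDist

variable {α : Type*} [DecidableEq α]

/-- Two finite sets are compatible if they are disjoint or nested. -/
def Compatible (A B : Finset α) : Prop :=
  A ∩ B = ∅ ∨ A ⊆ B ∨ B ⊆ A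

/-- A hierarchy over `S`: a laminar family of nonempty subsets of `S`
containing `S` and all singletons. -/
def IsHierarchy (S : Finset α) (F : Finset (Finset α)) : Prop :=
  (∀ A ∈ F, A ⊆ S ∧ A.Nonempty) ∧
  (∀ A ∈ F, ∀ B ∈ F, Compatible A B) ∧
  S ∈ F ∧ ∀ i ∈ S, ({i} : Finset α) ∈ F

/-- A nondegenerate (binary) hierarchy: a hierarchy with `2|S| - 1` clusters,
equivalently a maximal laminar family. -/
def Nondeg (S : Finset α) (F : Finset (Finset α)) : Prop :=
  IsHierarchy S F ∧ F.card = 2 * S.card - 1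

/-- `P` is the parent of `I` in the family `F`: the smallest cluster of `F`
strictly containing `I`. -/
def IsParent (F : Finset (Finset α)) (I P : Finset α) : Prop :=
  P ∈ F ∧ I ⊂ P ∧ ∀ Q ∈ F, I ⊂ Q → P ⊆ Q

/-- `G` is the result of an NNI move on `F` at some grandchild `C`:
`G = (F \ {parent C}) ∪ {grandparent C \ C}`. -/
def IsNNIMove (F G : Finset (Finset α)) : Prop :=
  ∃ C P GP, C ∈ F ∧ IsParent F C P ∧ IsParent F P GP ∧
    G = insert (GP \ C) (F.erase P)

/-- Restriction of a family of sets to `K`: `{A ∩ K : A ∈ F, A ∩ K ≠ ∅}`. -/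
noncomputable def restrictFam (F : Finset (Finset α)) (K : Finset α) : Finset (Finset α) :=
  (F.image (· ∩ K)).filter fun A => A.Nonempty

/-- The cardinality of the smallest common ancestor of `i` and `j` in `F`, i.e. the
minimum cardinality of a cluster of `F` containing both `i` and `j`. -/
noncomputable def caCard (F : Finset (Finset α)) (i j : α) : ℕ :=
  sInf {n | ∃ A ∈ F, i ∈ A ∧ j ∈ A ∧ A.card = n}

/-- Ultrametric representation `U(F)_{ij} = |ca(i,j)| - 1`. -/
noncomputable def Umat (F : Finset (Finset α)) (i j : α) : ℤ :=
  (caCard F i j : ℤ) - 1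

/-- Cluster-cardinality distance `d_CC = (1/2) Σ_{i,j ∈ S} |U(F)_{ij} - U(G)_{ij}|`. -/
noncomputable def dCC (S : Finset α) (F G : Finset (Finset α)) : ℚ :=
  (1 / 2) * ∑ i ∈ S, ∑ j ∈ S, |((Umat F i j : ℚ)) - ((Umat G i j : ℚ))|

/-- Robinson–Foulds distance: half the size of the symmetric difference of cluster sets. -/
noncomputable def dRF (F G : Finset (Finset α)) : ℚ :=
  (((F \ G) ∪ (G \ F)).card : ℚ) / 2

/-- Crossing dissimilarity: the number of incompatible pairs of clusters. -/
noncomputable def dCM (F G : Finset (Finset α)) : ℕ :=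
  ((F ×ˢ G).filter fun p => ¬ Compatible p.1 p.2).card

/-- Depth of a cluster: the number of its strict ancestors in `F`. -/
noncomputable def depth (F : Finset (Finset α)) (I : Finset α) : ℕ :=
  (F.filter fun J => I ⊂ J).card

/-- The children of `I` in `F`: the clusters of `F` whose parent is `I`. -/
noncomputable def children (F : Finset (Finset α)) (I : Finset α) : Finset (Finset α) :=
  F.filter fun C => IsParent F C I

/-- `η_{F,G}(I,J)`: the number of members of `(children I)|_J` incompatible with
the family `(children J)|_I`. -/
noncomputable def eta (F G : Finset (Finset α)) (I J : Finset α) : ℕ :=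
  ((restrictFam (children F I) J).filter
    fun A => ∃ B ∈ restrictFam (children G J) I, ¬ Compatible A B).card

/-- `θ(x) = (x² + x)/2`. -/
def theta (x : ℕ) : ℚ := ((x : ℚ) ^ 2 + x) / 2

/-- Closed-form NNI navigation distance `d_Nav(F,G) = Σ_{I∈F, J∈G} θ(η_{F,G}(I,J))`. -/
noncomputable def dNav (F G : Finset (Finset α)) : ℚ :=
  ∑ I ∈ F, ∑ J ∈ G, theta (eta F G I J)

/-!
Two clusters of one hierarchy never cross, so every crossing pair lies in
`(F \ G) × (G \ F)`, and both factors have `d_RF` elements since `|F| = |G|`. Conversely, a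
laminar family of nonempty subsets of `S` has at most `2|S| - 1` members, so a nondegenerate
hierarchy is a maximal laminar family and every cluster of `F \ G` crosses some cluster of `G`.
-/

def IsLaminar (L : Finset (Finset α)) : Prop :=
  ∀ A ∈ L, ∀ B ∈ L, Compatible A B

lemma Compatible.symm {A B : Finset α} (h : Compatible A B) : Compatible B A := by
  rcases h with h | h | h
  · exact Or.inl (by rwa [Finset.inter_comm])
  · exact Or.inr (Or.inr h)
  · exact Or.inr (Or.inl h)

lemma IsLaminar.subset {L L' : Finset (Finset α)} (hL : IsLaminar L) (h : L' ⊆ L) :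
    IsLaminar L' :=
  fun A hA B hB => hL A (h hA) B (h hB)

lemma IsLaminar.insert {L : Finset (Finset α)} {I : Finset α} (hL : IsLaminar L)
    (hI : ∀ J ∈ L, Compatible I J) : IsLaminar (insert I L) := by
  intro A hA B hB
  rcases Finset.mem_insert.mp hA with rfl | hA' <;> rcases Finset.mem_insert.mp hB with rfl | hB'
  · exact Or.inr (Or.inl subset_rfl)
  · exact hI B hB'
  · exact (hI A hA').symm
  · exact hL A hA' B hB'

lemma IsLaminar.pairwiseDisjoint_maximal {L : Finset (Finset α)} (hL : IsLaminar L) :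
    (L.filter (Maximal (· ∈ L)) : Set (Finset α)).PairwiseDisjoint id := by
  intro A hA B hB hAB
  obtain ⟨hAL, hAmax⟩ := Finset.mem_filter.mp hA
  obtain ⟨hBL, hBmax⟩ := Finset.mem_filter.mp hB
  rcases hL A hAL B hBL with h | h | h
  · exact Finset.disjoint_iff_inter_eq_empty.mpr h
  · exact absurd (hAmax.eq_of_le hBL h) hAB
  · exact absurd (hBmax.eq_of_le hAL h).symm hAB

lemma IsLaminar.sum_card_maximal_le {S : Finset α} {L : Finset (Finset α)} (hL : IsLaminar L)
    (hsub : ∀ A ∈ L, A ⊆ S) : ∑ A ∈ L.filter (Maximal (· ∈ L)), A.card ≤ S.card := by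
  calc _ = ((L.filter (Maximal (· ∈ L))).biUnion id).card :=
        (Finset.card_biUnion hL.pairwiseDisjoint_maximal).symm
    _ ≤ S.card := Finset.card_le_card <| Finset.biUnion_subset.mpr fun A hA =>
        hsub A (Finset.mem_filter.mp hA).1

lemma sum_card_lt_of_card_le_one {β : Type*} {S : Finset β} {M : Finset (Finset β)}
    (hM : M.card ≤ 1) (hS : S.Nonempty) (hsub : ∀ A ∈ M, A ⊂ S) :
    ∑ A ∈ M, A.card < S.card := by
  rcases M.eq_empty_or_nonempty with rfl | ⟨A, hA⟩
  · simpa using hS.card_pos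
  · have hMA : M = {A} := Finset.eq_singleton_iff_unique_mem.mpr
      ⟨hA, fun B hB => Finset.card_le_one.mp hM B hB A hA⟩
    rw [hMA, Finset.sum_singleton]
    exact Finset.card_lt_card (hsub A hA)

/-- The maximal members `A ≠ S` of `L` are disjoint and each lies above at most `2|A| - 1`
members of `L`; the bound follows unless there are fewer than two of them, and then they miss a
point of `S`. -/
theorem IsLaminar.card_le {S : Finset α} {L : Finset (Finset α)} (hL : IsLaminar L)
    (hsub : ∀ A ∈ L, A ⊆ S ∧ A.Nonempty) : L.card ≤ 2 * S.card - 1 := by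
  induction S using Finset.strongInduction generalizing L with
  | H S ih =>
  rcases S.eq_empty_or_nonempty with rfl | hS
  · suffices L = ∅ by simp [this]
    exact Finset.eq_empty_of_forall_notMem fun A hA =>
      (hsub A hA).2.ne_empty (Finset.subset_empty.mp (hsub A hA).1)
  set L' := L.erase S
  set M := L'.filter (Maximal (· ∈ L'))
  have hL' : IsLaminar L' := hL.subset (Finset.erase_subset _ _)
  have hproper : ∀ A ∈ L', A ⊂ S := fun A hA =>
    (hsub A (Finset.mem_of_mem_erase hA)).1.ssubset_of_ne (Finset.ne_of_mem_erase hA)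
  have hcover : L' ⊆ M.biUnion fun A => L'.filter (· ⊆ A) := fun B hB => by
    obtain ⟨A, hBA, hA⟩ := L'.exists_le_maximal hB
    exact Finset.mem_biUnion.mpr
      ⟨A, Finset.mem_filter.mpr ⟨hA.prop, hA⟩, Finset.mem_filter.mpr ⟨hB, hBA⟩⟩
  have hbelow : ∀ A ∈ M, (L'.filter (· ⊆ A)).card + 1 ≤ 2 * A.card := fun A hA => by
    have hAL' := (Finset.mem_filter.mp hA).1
    have hAne := (hsub A (Finset.mem_of_mem_erase hAL')).2
    have := ih A (hproper A hAL') (hL'.subset (Finset.filter_subset _ _)) fun B hB =>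
      have hB' := Finset.mem_filter.mp hB
      ⟨hB'.2, (hsub B (Finset.mem_of_mem_erase hB'.1)).2⟩
    have := hAne.card_pos
    omega
  have hsum : ∑ A ∈ M, A.card ≤ S.card := hL'.sum_card_maximal_le fun A hA => (hproper A hA).1
  have hcount : L'.card + M.card ≤ 2 * ∑ A ∈ M, A.card := calc
    L'.card + M.card ≤ ∑ A ∈ M, ((L'.filter (· ⊆ A)).card + 1) := by
        rw [Finset.sum_add_distrib, Finset.sum_const, smul_eq_mul, mul_one]
        exact Nat.add_le_add_right ((Finset.card_le_card hcover).trans Finset.card_biUnion_le) _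
    _ ≤ 2 * ∑ A ∈ M, A.card := by
        rw [Finset.mul_sum]; exact Finset.sum_le_sum hbelow
  have hLL' : L.card ≤ L'.card + 1 := Nat.sub_le_iff_le_add.mp Finset.pred_card_le_card_erase
  rcases le_or_gt M.card 1 with hM | hM
  · have := sum_card_lt_of_card_le_one hM hS fun A hA => hproper A (Finset.mem_filter.mp hA).1
    omega
  · omega

lemma Nondeg.isLaminar {S : Finset α} {F : Finset (Finset α)} (hF : Nondeg S F) : IsLaminar F :=
  hF.1.2.1

lemma Nondeg.exists_not_compatible {S : Finset α} {G : Finset (Finset α)} (hG : Nondeg S G)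
    {I : Finset α} (hIS : I ⊆ S) (hI : I.Nonempty) (hIG : I ∉ G) :
    ∃ J ∈ G, ¬ Compatible I J := by
  by_contra! hcompat
  have hcard := (hG.isLaminar.insert hcompat).card_le (S := S) fun A hA => by
    rcases Finset.mem_insert.mp hA with rfl | hA
    · exact ⟨hIS, hI⟩
    · exact hG.1.1 A hA
  rw [Finset.card_insert_of_notMem hIG, hG.2] at hcard
  have := hI.card_pos.trans_le (Finset.card_le_card hIS)
  omega

lemma dRF_eq_card_sdiff {F G : Finset (Finset α)} (h : F.card = G.card) :
    dRF F G = (F \ G).card := by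
  rw [dRF, Finset.card_union_of_disjoint disjoint_sdiff_sdiff, ← Finset.card_sdiff_comm h]
  push_cast
  ring

lemma dCM_le_card_sdiff_mul {F G : Finset (Finset α)} (hF : IsLaminar F) (hG : IsLaminar G) :
    dCM F G ≤ (F \ G).card * (G \ F).card := by
  rw [dCM, ← Finset.card_product]
  refine Finset.card_le_card fun p hp => ?_
  simp only [Finset.mem_filter, Finset.mem_product, Finset.mem_sdiff] at hp ⊢
  exact ⟨⟨hp.1.1, fun hG1 => hp.2 (hG _ hG1 _ hp.1.2)⟩,
    hp.1.2, fun hF2 => hp.2 (hF _ hp.1.1 _ hF2)⟩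

lemma card_sdiff_le_dCM {S : Finset α} {F G : Finset (Finset α)}
    (hF : ∀ A ∈ F, A ⊆ S ∧ A.Nonempty) (hG : Nondeg S G) : (F \ G).card ≤ dCM F G :=
  Finset.card_le_card_of_surjOn Prod.fst fun I hI => by
    obtain ⟨hIF, hIG⟩ := Finset.mem_sdiff.mp hI
    obtain ⟨J, hJ, hIJ⟩ := hG.exists_not_compatible (hF I hIF).1 (hF I hIF).2 hIG
    exact ⟨(I, J), Finset.mem_filter.mpr ⟨Finset.mem_product.mpr ⟨hIF, hJ⟩, hIJ⟩, rfl⟩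

theorem dRF_le_dCM_le_dRF_sq (S : Finset α) (F G : Finset (Finset α))
    (hF : Nondeg S F) (hG : Nondeg S G) :
    dRF F G ≤ (dCM F G : ℚ) ∧ (dCM F G : ℚ) ≤ (dRF F G) ^ 2 := by
  have hcard : F.card = G.card := hF.2.trans hG.2.symm
  have hupper := dCM_le_card_sdiff_mul hF.isLaminar hG.isLaminar
  rw [← Finset.card_sdiff_comm hcard, ← sq] at hupper
  rw [dRF_eq_card_sdiff hcard]
  exact ⟨mod_cast card_sdiff_le_dCM hF.1.1 hG, mod_cast hupper⟩

end TreeDist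
end

section
/- For any pair of hierarchies 𝒜, ℬ over a finite set S (degenerate or not), the crossing dissimilarity is bounded above by the cluster-cardinality distance: d_CM(𝒜,ℬ) ≤ d_CC(𝒜,ℬ). -/
open scoped Classical

namespace TreeDist

variable {α : Type*} [DecidableEq α]

/-!
Let `(I, J)` be a crossing pair with `|I| ≤ |J|`. Choosing `a ∈ I ∩ J` and `b ∈ I \ J` with
`|ca_𝒜(a, b)|` maximal forces `ca_𝒜(a, b) = I`, so `J` is a cluster of `ℬ` containing `a` but not
`b` with `|J| ≥ |ca_𝒜(a, b)|`, and `(I, J)` is determined by `(a, b)` and `J`. The clusters of a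
hierarchy that separate `a` from `b` (in either direction) and have at least `m ≥ 2` points form
two chains inside `ca(a, b)` with disjoint unions, so there are at most `|ca(a, b)| - m` of them.
Crossing pairs with `|J| < |I|` are charged in the same way with the roles of `𝒜` and `ℬ`
exchanged, so `(a, b)` and `(b, a)` together receive at most `|U(𝒜)_{ab} - U(ℬ)_{ab}|` pairs;
summing over ordered pairs gives the factor `1/2` of `d_CC`.
-/

section CaCard

variable {β : Type*} {A : Finset β} {F : Finset (Finset β)} {x y : β}

lemma caCard_comm (F : Finset (Finset β)) (x y : β) : caCard F x y = caCard F y x := by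
  simp only [caCard, and_left_comm]

lemma caCard_le_card (hA : A ∈ F) (hx : x ∈ A) (hy : y ∈ A) : caCard F x y ≤ A.card :=
  Nat.sInf_le ⟨A, hA, hx, hy, rfl⟩

lemma exists_mem_card_eq_caCard (hA : A ∈ F) (hx : x ∈ A) (hy : y ∈ A) :
    ∃ M ∈ F, x ∈ M ∧ y ∈ M ∧ M.card = caCard F x y :=
  Nat.sInf_mem (s := {n | ∃ A ∈ F, x ∈ A ∧ y ∈ A ∧ A.card = n}) ⟨A.card, A, hA, hx, hy, rfl⟩

lemma two_le_caCard (hA : A ∈ F) (hx : x ∈ A) (hy : y ∈ A) (hxy : x ≠ y) :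
    2 ≤ caCard F x y := by
  obtain ⟨M, -, hxM, hyM, hMc⟩ := exists_mem_card_eq_caCard hA hx hy
  rw [← hMc, ← Finset.card_pair hxy]
  exact Finset.card_le_card (Finset.insert_subset hxM (Finset.singleton_subset_iff.mpr hyM))

end CaCard

section Laminar

variable {S A B I J : Finset α} {F : Finset (Finset α)} {x : α}

def Laminar (F : Finset (Finset α)) : Prop :=
  ∀ A ∈ F, ∀ B ∈ F, Compatible A B

lemma IsHierarchy.laminar (hF : IsHierarchy S F) : Laminar F := hF.2.1

lemma IsHierarchy.self_mem (hF : IsHierarchy S F) : S ∈ F := hF.2.2.1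

lemma IsHierarchy.subset (hF : IsHierarchy S F) : ∀ A ∈ F, A ⊆ S := fun A hA => (hF.1 A hA).1

lemma compatible_comm : Compatible A B ↔ Compatible B A := by
  unfold Compatible
  rw [Finset.inter_comm]
  tauto

lemma Compatible.subset_or_subset (h : Compatible A B) (hxA : x ∈ A) (hxB : x ∈ B) :
    A ⊆ B ∨ B ⊆ A :=
  h.resolve_left fun hAB => Finset.notMem_empty x (hAB ▸ Finset.mem_inter.mpr ⟨hxA, hxB⟩)

lemma Laminar.subset_of_card_le (hF : Laminar F) (hA : A ∈ F) (hB : B ∈ F)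
    (hxA : x ∈ A) (hxB : x ∈ B) (hAB : A.card ≤ B.card) : A ⊆ B := by
  rcases (hF A hA B hB).subset_or_subset hxA hxB with h | h
  · exact h
  · rw [Finset.eq_of_subset_of_card_le h hAB]

lemma Laminar.eq_of_card_eq (hF : Laminar F) (hA : A ∈ F) (hB : B ∈ F)
    (hxA : x ∈ A) (hxB : x ∈ B) (hAB : A.card = B.card) : A = B :=
  (hF.subset_of_card_le hA hB hxA hxB hAB.le).antisymm
    (hF.subset_of_card_le hB hA hxB hxA hAB.ge)

lemma Laminar.exists_caCard_eq_card (hF : Laminar F) (hI : I ∈ F) (hIJ : (I ∩ J).Nonempty)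
    (hIJ' : ¬I ⊆ J) : ∃ a ∈ I, a ∈ J ∧ ∃ b ∈ I, b ∉ J ∧ caCard F a b = I.card := by
  obtain ⟨a₀, ha₀⟩ := hIJ
  obtain ⟨b₀, hb₀⟩ := Finset.not_subset.mp hIJ'
  obtain ⟨⟨a, b⟩, hab, hmax⟩ := ((I ∩ J) ×ˢ (I \ J)).exists_max_image
    (fun q => caCard F q.1 q.2) ⟨(a₀, b₀), by simp_all⟩
  simp only [Finset.mem_product, Finset.mem_inter, Finset.mem_sdiff] at hab hmax
  obtain ⟨⟨haI, haJ⟩, hbI, hbJ⟩ := hab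
  obtain ⟨M, hM, haM, hbM, hMc⟩ := exists_mem_card_eq_caCard hI haI hbI
  refine ⟨a, haI, haJ, b, hbI, hbJ, (caCard_le_card hI haI hbI).antisymm ?_⟩
  suffices I ⊆ M from hMc ▸ Finset.card_le_card this
  -- A point `c ∈ I \ M` would pair with `b` or with `a` into a pair whose smallest common
  -- cluster strictly contains `M`.
  intro c hcI
  by_cases hcJ : c ∈ J
  · obtain ⟨M', hM', hcM', hbM', hM'c⟩ := exists_mem_card_eq_caCard hI hcI hbI
    exact hF.subset_of_card_le hM' hM hbM' hbM
      (hM'c ▸ hMc ▸ hmax (c, b) ⟨⟨hcI, hcJ⟩, hbI, hbJ⟩) hcM'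
  · obtain ⟨M', hM', haM', hcM', hM'c⟩ := exists_mem_card_eq_caCard hI haI hcI
    exact hF.subset_of_card_le hM' hM haM' haM
      (hM'c ▸ hMc ▸ hmax (a, c) ⟨⟨haI, haJ⟩, hcI, hcJ⟩) hcM'

end Laminar

lemma card_le_of_isChain {β : Type*} {C : Finset (Finset β)}
    (hC : IsChain (· ⊆ ·) (C : Set (Finset β))) {U : Finset β} {m : ℕ}
    (hCU : ∀ A ∈ C, A ⊆ U ∧ m ≤ A.card) : C.card ≤ U.card + 1 - m :=
  calc C.card ≤ (Finset.Icc m U.card).card := by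
        refine Finset.card_le_card_of_injOn Finset.card (fun A hA => ?_) (fun A hA B hB hAB => ?_)
        · exact Finset.mem_Icc.mpr ⟨(hCU A hA).2, Finset.card_le_card (hCU A hA).1⟩
        · rcases hC.total hA hB with h | h
          · exact Finset.eq_of_subset_of_card_le h hAB.ge
          · exact (Finset.eq_of_subset_of_card_le h hAB.le).symm
    _ = U.card + 1 - m := Nat.card_Icc _ _

section Separators

variable {A Y : Finset α} {F : Finset (Finset α)} {x y : α} {m : ℕ}

def separators (F : Finset (Finset α)) (x y : α) (m : ℕ) : Finset (Finset α) :=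
  F.filter fun J => x ∈ J ∧ y ∉ J ∧ m ≤ J.card

lemma separators_self : separators F x x m = ∅ :=
  Finset.filter_false_of_mem fun _ _ h => h.2.1 h.1

lemma mem_separators : A ∈ separators F x y m ↔ A ∈ F ∧ x ∈ A ∧ y ∉ A ∧ m ≤ A.card :=
  Finset.mem_filter

lemma Laminar.isChain_separators (hF : Laminar F) :
    IsChain (· ⊆ ·) (separators F x y m : Set (Finset α)) := fun A hA B hB _ => by
  rw [Finset.mem_coe, mem_separators] at hA hB
  exact (hF A hA.1 B hB.1).subset_or_subset hA.2.1 hB.2.1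

lemma Laminar.sup_separators_subset_erase (hF : Laminar F) (hY : Y ∈ F) (hx : x ∈ Y)
    (hy : y ∈ Y) : (separators F x y m).sup id ⊆ Y.erase y :=
  Finset.sup_le fun A hA => by
    rw [mem_separators] at hA
    rcases (hF A hA.1 Y hY).subset_or_subset hA.2.1 hx with h | h
    · exact Finset.subset_erase.mpr ⟨h, hA.2.2.1⟩
    · exact absurd (h hy) hA.2.2.1

lemma Laminar.disjoint_sup_separators (hF : Laminar F) :
    Disjoint ((separators F x y m).sup id) ((separators F y x m).sup id) :=
  Finset.disjoint_sup_left.mpr fun A hA => Finset.disjoint_sup_right.mpr fun B hB => by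
    rw [mem_separators] at hA hB
    rcases hF A hA.1 B hB.1 with h | h | h
    · exact Finset.disjoint_iff_inter_eq_empty.mpr h
    · exact absurd (h hA.2.1) hB.2.2.1
    · exact absurd (h hB.2.1) hA.2.2.1

lemma Laminar.card_separators_le_card_sup (hF : Laminar F) :
    (separators F x y m).card ≤ ((separators F x y m).sup id).card + 1 - m :=
  card_le_of_isChain hF.isChain_separators fun _ hA =>
    ⟨Finset.le_sup (f := id) hA, (mem_separators.mp hA).2.2.2⟩

lemma card_separators_eq_zero_or_le_card_sup :
    (separators F x y m).card = 0 ∨ m ≤ ((separators F x y m).sup id).card := by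
  rcases (separators F x y m).eq_empty_or_nonempty with h | ⟨A, hA⟩
  · exact Or.inl (Finset.card_eq_zero.mpr h)
  · exact Or.inr ((mem_separators.mp hA).2.2.2.trans
      (Finset.card_le_card (Finset.le_sup (f := id) hA)))

lemma Laminar.card_separators_add_card_separators_le (hF : Laminar F) (hY : Y ∈ F)
    (hx : x ∈ Y) (hy : y ∈ Y) (hm : 2 ≤ m) :
    (separators F x y m).card + (separators F y x m).card ≤ Y.card - m := by
  -- Each side is a chain inside the union of its members; the two unions are disjoint
  -- subsets of `Y`, and each misses a point of `Y`.
  have hUx := hF.sup_separators_subset_erase (m := m) hY hx hy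
  have hUy := hF.sup_separators_subset_erase (m := m) hY hy hx
  have hUxy : ((separators F x y m).sup id).card + ((separators F y x m).sup id).card
      ≤ Y.card := by
    rw [← Finset.card_union_of_disjoint hF.disjoint_sup_separators]
    exact Finset.card_le_card (Finset.union_subset
      (hUx.trans (Finset.erase_subset _ _)) (hUy.trans (Finset.erase_subset _ _)))
  have := (Finset.card_le_card hUx).trans_lt (Finset.card_erase_lt_of_mem hy)
  have := (Finset.card_le_card hUy).trans_lt (Finset.card_erase_lt_of_mem hx)
  have := hF.card_separators_le_card_sup (x := x) (y := y) (m := m)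
  have := hF.card_separators_le_card_sup (x := y) (y := x) (m := m)
  have := card_separators_eq_zero_or_le_card_sup (F := F) (x := x) (y := y) (m := m)
  have := card_separators_eq_zero_or_le_card_sup (F := F) (x := y) (y := x) (m := m)
  omega

end Separators

section Crossing

variable {S : Finset α} {F G : Finset (Finset α)}

noncomputable def crossingPairs (F G : Finset (Finset α)) (k : ℕ) : Finset (Finset α × Finset α) :=
  (F ×ˢ G).filter fun p => ¬Compatible p.1 p.2 ∧ p.1.card + k ≤ p.2.card

lemma dCM_eq_card_crossingPairs_add (F G : Finset (Finset α)) :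
    dCM F G = (crossingPairs F G 0).card + (crossingPairs G F 1).card := by
  rw [dCM, ← Finset.card_filter_add_card_filter_not
    (fun p : Finset α × Finset α => p.1.card ≤ p.2.card)]
  congr 1
  · simp only [crossingPairs, Finset.filter_filter, add_zero]
  · refine Finset.card_nbij' Prod.swap Prod.swap (fun p hp => ?_) (fun p hp => ?_)
      (fun _ _ => rfl) (fun _ _ => rfl) <;>
    simp only [crossingPairs, Finset.coe_filter, Finset.mem_filter, Finset.mem_product,
      Set.mem_ofPred_eq, Prod.fst_swap, Prod.snd_swap] at hp ⊢
    · exact ⟨⟨hp.1.1.2, hp.1.1.1⟩, fun h => hp.1.2 (compatible_comm.mp h), by omega⟩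
    · exact ⟨⟨⟨hp.1.2, hp.1.1⟩, fun h => hp.2.1 (compatible_comm.mp h)⟩, by omega⟩

lemma Laminar.card_crossingPairs_le (hF : Laminar F) (hFS : ∀ A ∈ F, A ⊆ S) (k : ℕ) :
    (crossingPairs F G k).card
      ≤ ∑ x ∈ S, ∑ y ∈ S, (separators G x y (caCard F x y + k)).card := by
  have witness : ∀ p ∈ crossingPairs F G k, ∃ q : α × α,
      q.1 ∈ p.1 ∧ q.1 ∈ p.2 ∧ q.2 ∈ p.1 ∧ q.2 ∉ p.2 ∧ caCard F q.1 q.2 = p.1.card := by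
    intro p hp
    simp only [crossingPairs, Finset.mem_filter, Finset.mem_product, Compatible,
      not_or] at hp
    obtain ⟨a, haI, haJ, b, hbI, hbJ, hab⟩ :=
      hF.exists_caCard_eq_card hp.1.1 (Finset.nonempty_iff_ne_empty.mpr hp.2.1.1) hp.2.1.2.1
    exact ⟨(a, b), haI, haJ, hbI, hbJ, hab⟩
  rw [← Finset.sum_product' (f := fun x y => (separators G x y (caCard F x y + k)).card),
    ← Finset.card_sigma]
  refine Finset.card_le_card_of_forall_subsingleton
    (fun p t => t.2 = p.2 ∧ t.1.1 ∈ p.1 ∧ caCard F t.1.1 t.1.2 = p.1.card)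
    (fun p hp => ?_) (fun t _ p hp p' hp' => ?_)
  · obtain ⟨⟨a, b⟩, haI, haJ, hbI, hbJ, hab⟩ := witness p hp
    simp only [crossingPairs, Finset.mem_filter, Finset.mem_product] at hp
    refine ⟨⟨(a, b), p.2⟩, ?_, rfl, haI, hab⟩
    simp only [Finset.mem_sigma, Finset.mem_product, mem_separators, hab]
    exact ⟨⟨hFS _ hp.1.1 haI, hFS _ hp.1.1 hbI⟩, hp.1.2, haJ, hbJ, hp.2.2⟩
  · obtain ⟨hp, hpt, hap, hcap⟩ := hp
    obtain ⟨hp', hpt', hap', hcap'⟩ := hp'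
    simp only [crossingPairs, Finset.mem_filter, Finset.mem_product] at hp hp'
    exact Prod.ext (hF.eq_of_card_eq hp.1.1 hp'.1.1 hap hap' (hcap.symm.trans hcap'))
      (hpt.symm.trans hpt')

end Crossing

lemma card_separators_le_abs_sub_Umat {S : Finset α} {F G : Finset (Finset α)}
    (hF : IsHierarchy S F) (hG : IsHierarchy S G) {x y : α} (hx : x ∈ S) (hy : y ∈ S) :
    (((separators G x y (caCard F x y)).card + (separators G y x (caCard F x y)).card +
        ((separators F x y (caCard G x y + 1)).card +
          (separators F y x (caCard G x y + 1)).card) : ℕ) : ℚ)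
      ≤ |(Umat F x y : ℚ) - Umat G x y| := by
  rcases eq_or_ne x y with rfl | hxy
  · simp only [separators_self, Finset.card_empty, add_zero, Nat.cast_zero]
    exact abs_nonneg _
  have hf := two_le_caCard hF.self_mem hx hy hxy
  have hg := two_le_caCard hG.self_mem hx hy hxy
  obtain ⟨MF, hMF, hxMF, hyMF, hMFc⟩ := exists_mem_card_eq_caCard hF.self_mem hx hy
  obtain ⟨MG, hMG, hxMG, hyMG, hMGc⟩ := exists_mem_card_eq_caCard hG.self_mem hx hy
  have hGsep := hG.laminar.card_separators_add_card_separators_le hMG hxMG hyMG hf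
  have hFsep := hF.laminar.card_separators_add_card_separators_le
    (m := caCard G x y + 1) hMF hxMF hyMF (by omega)
  rw [hMGc] at hGsep
  rw [hMFc] at hFsep
  simp only [Umat, Int.cast_sub, Int.cast_natCast, Int.cast_one, sub_sub_sub_cancel_right]
  rcases le_total (caCard F x y) (caCard G x y) with h | h
  · rw [abs_sub_comm, abs_of_nonneg (sub_nonneg.mpr (by exact_mod_cast h)), le_sub_iff_add_le]
    exact_mod_cast (by omega : _ + caCard F x y ≤ caCard G x y)
  · rw [abs_of_nonneg (sub_nonneg.mpr (by exact_mod_cast h)), le_sub_iff_add_le]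
    exact_mod_cast (by omega : _ + caCard G x y ≤ caCard F x y)

theorem dCM_le_dCC (S : Finset α) (F G : Finset (Finset α))
    (hF : IsHierarchy S F) (hG : IsHierarchy S G) :
    (dCM F G : ℚ) ≤ dCC S F G := by
  set D : α → α → ℕ := fun x y =>
    (separators G x y (caCard F x y)).card + (separators F x y (caCard G x y + 1)).card with hD
  have hcharge : dCM F G ≤ ∑ x ∈ S, ∑ y ∈ S, D x y := by
    simp only [hD, Finset.sum_add_distrib, dCM_eq_card_crossingPairs_add]
    exact add_le_add (by simpa using hF.laminar.card_crossingPairs_le (G := G) hF.subset 0)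
      (hG.laminar.card_crossingPairs_le hG.subset 1)
  have hpair : ∀ x ∈ S, ∀ y ∈ S, ((D x y + D y x : ℕ) : ℚ) ≤ |(Umat F x y : ℚ) - Umat G x y| := by
    intro x hx y hy
    simp only [hD, caCard_comm F y x, caCard_comm G y x]
    convert card_separators_le_abs_sub_Umat hF hG hx hy using 2
    ring
  calc (dCM F G : ℚ) ≤ ∑ x ∈ S, ∑ y ∈ S, (D x y : ℚ) := by exact_mod_cast hcharge
    _ = (1 / 2) * ∑ x ∈ S, ∑ y ∈ S, ((D x y + D y x : ℕ) : ℚ) := by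
      push_cast
      simp only [Finset.sum_add_distrib]
      rw [Finset.sum_comm (f := fun x y => (D y x : ℚ))]
      ring
    _ ≤ dCC S F G := by
      unfold dCC
      gcongr with x hx y hy
      exact hpair x hx y hy

end TreeDist
end
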